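/- Let Q ⊆ ℝ^η × ℝ × ℝ be the set of (x, y, z) with x ∈ [L, U], y ≥ 0, z ∈ [0, 1], satisfying y ≥ w · x + b and, for every subset I ⊆ {1,…,η}, y ≤ Σ_{i ∈ I} w_i (x_i − L̆_i (1 − z)) + ( b + Σ_{i ∉ I} w_i Ŭ_i ) z. Then Q together with the integrality constraint z ∈ {0,1} is an ideal MIP formulation of gr(ReLU ∘ f; [L, U]): (i) the projection onto the (x, y)-coordinates of {(x,y,z) ∈ Q : z ∈ {0,1}} equals gr(ReLU ∘ f; [L, U]); and (ii) every extreme point (x, y, z) of Q satisfies z ∈ {0,1}. -/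

import Mathlib

noncomputable section

/-- Dot product on `Fin n → ℝ`. -/
def dotp {n : ℕ} (w x : Fin n → ℝ) : ℝ := ∑ i, w i * x i

/-- `L̆_i`: `L_i` if `w_i ≥ 0`, else `U_i`. -/
def breveL {n : ℕ} (w L U : Fin n → ℝ) (i : Fin n) : ℝ := if 0 ≤ w i then L i else U i

/-- `Ŭ_i`: `U_i` if `w_i ≥ 0`, else `L_i`. -/
def breveU {n : ℕ} (w L U : Fin n → ℝ) (i : Fin n) : ℝ := if 0 ≤ w i then U i else L i

/-!
On the face `z = 0` the inequalities defining `Q` collapse to `y = 0 ≥ f x` (take `I = ∅`), and on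
the face `z = 1` to `y = f x ≥ 0` (take `I = univ`); this gives the projection statement.

For integrality, a point `(x, y, z)` of `Q` with `0 < z < 1` is written as
`(1 - z) • (x₀, 0, 0) + z • (x₁, y / z, 1)` with both ends in `Q`. With `u = z • x₁`, the admissible
`u` form a box containing `z • x`, and the affine map `u ↦ w ⬝ᵥ u + z b` is at most `y` at `z • x`.
At the corner of the box maximising it, its value is `min_I` of the right-hand sides of the
`I`-inequalities, hence at least `y`. By the intermediate value theorem some admissible `u` hits
`y` exactly.
-/

open Finset

theorem Finset.exists_sum_add_sum_compl_eq_sum_min {ι M : Type*} [Fintype ι] [DecidableEq ι]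
    [AddCommMonoid M] [LinearOrder M] (f g : ι → M) :
    ∃ I : Finset ι, ∑ i ∈ I, f i + ∑ i ∈ Iᶜ, g i = ∑ i, min (f i) (g i) := by
  refine ⟨univ.filter fun i => f i ≤ g i, ?_⟩
  rw [← sum_add_sum_compl (univ.filter fun i => f i ≤ g i) fun i => min (f i) (g i)]
  congr 1
  · exact sum_congr rfl fun i hi => (min_eq_left (mem_filter.1 hi).2).symm
  · refine sum_congr rfl fun i hi => (min_eq_right ?_).symm
    simp only [mem_compl, mem_filter, mem_univ, true_and, not_le] at hi
    exact hi.le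

theorem dotp_eq_dotProduct {n : ℕ} (w x : Fin n → ℝ) : dotp w x = w ⬝ᵥ x := rfl

section ReluFormulation

variable {n : ℕ} (w : Fin n → ℝ) (b : ℝ) (L U : Fin n → ℝ)

theorem mul_sub_breveL_nonneg {x : Fin n → ℝ} {i : Fin n} (hx : L i ≤ x i ∧ x i ≤ U i) :
    0 ≤ w i * (x i - breveL w L U i) := by
  unfold breveL
  split_ifs <;> nlinarith

theorem mul_le_mul_breveU {x : Fin n → ℝ} {i : Fin n} (hx : L i ≤ x i ∧ x i ≤ U i) :
    w i * x i ≤ w i * breveU w L U i := by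
  unfold breveU
  split_ifs <;> nlinarith

def reluFormulation : Set ((Fin n → ℝ) × ℝ × ℝ) :=
  {p | (∀ i, L i ≤ p.1 i ∧ p.1 i ≤ U i) ∧ 0 ≤ p.2.1
      ∧ 0 ≤ p.2.2 ∧ p.2.2 ≤ 1
      ∧ dotp w p.1 + b ≤ p.2.1
      ∧ ∀ I : Finset (Fin n),
          p.2.1 ≤ ∑ i ∈ I, w i * (p.1 i - breveL w L U i * (1 - p.2.2))
            + (b + ∑ i ∈ Iᶜ, w i * breveU w L U i) * p.2.2}

variable {w b L U}

theorem mk_zero_mem_reluFormulation_iff {x : Fin n → ℝ} {y : ℝ} :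
    (x, y, 0) ∈ reluFormulation w b L U ↔
      (∀ i, L i ≤ x i ∧ x i ≤ U i) ∧ dotp w x + b ≤ 0 ∧ y = 0 := by
  simp only [reluFormulation, Set.mem_ofPred_eq, sub_zero, mul_one, mul_zero, add_zero]
  constructor
  · rintro ⟨hx, hy, -, -, hfy, hI⟩
    have hy0 : y = 0 := le_antisymm (by simpa using hI ∅) hy
    exact ⟨hx, hy0 ▸ hfy, hy0⟩
  · rintro ⟨hx, hf, rfl⟩
    exact ⟨hx, le_rfl, le_rfl, zero_le_one, hf,
      fun I => sum_nonneg fun i _ => mul_sub_breveL_nonneg w L U (hx i)⟩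

theorem mk_one_mem_reluFormulation_iff {x : Fin n → ℝ} {y : ℝ} :
    (x, y, 1) ∈ reluFormulation w b L U ↔
      (∀ i, L i ≤ x i ∧ x i ≤ U i) ∧ 0 ≤ dotp w x + b ∧ y = dotp w x + b := by
  simp only [reluFormulation, Set.mem_ofPred_eq, sub_self, mul_zero, sub_zero, mul_one]
  constructor
  · rintro ⟨hx, hy, -, -, hfy, hI⟩
    have hyf : y = dotp w x + b :=
      le_antisymm (by simpa [dotp] using hI univ) hfy
    exact ⟨hx, hyf ▸ hy, hyf⟩
  · rintro ⟨hx, hf, rfl⟩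
    refine ⟨hx, hf, zero_le_one, le_rfl, le_rfl, fun I => ?_⟩
    have hsplit := sum_add_sum_compl I fun i => w i * x i
    have hcompl := sum_le_sum fun i (_ : i ∈ Iᶜ) => mul_le_mul_breveU w L U (hx i)
    rw [dotp]
    linarith

theorem image_reluFormulation_binary :
    (fun p : (Fin n → ℝ) × ℝ × ℝ => (p.1, p.2.1)) ''
        {p ∈ reluFormulation w b L U | p.2.2 = 0 ∨ p.2.2 = 1}
      = {q : (Fin n → ℝ) × ℝ | (∀ i, L i ≤ q.1 i ∧ q.1 i ≤ U i)
          ∧ q.2 = max 0 (dotp w q.1 + b)} := by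
  ext ⟨x, y⟩
  constructor
  · rintro ⟨⟨x, y, z⟩, ⟨hp, rfl | rfl⟩, h⟩ <;> cases h
    · obtain ⟨hx, hf, rfl⟩ := mk_zero_mem_reluFormulation_iff.1 hp
      exact ⟨hx, (max_eq_left hf).symm⟩
    · obtain ⟨hx, hf, rfl⟩ := mk_one_mem_reluFormulation_iff.1 hp
      exact ⟨hx, (max_eq_right hf).symm⟩
  · rintro ⟨hx, hy : y = max 0 (dotp w x + b)⟩
    subst hy
    rcases le_total (dotp w x + b) 0 with hf | hf
    · exact ⟨(x, _, 0), ⟨mk_zero_mem_reluFormulation_iff.2 ⟨hx, hf, max_eq_left hf⟩,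
        Or.inl rfl⟩, rfl⟩
    · exact ⟨(x, _, 1), ⟨mk_one_mem_reluFormulation_iff.2 ⟨hx, hf, max_eq_right hf⟩,
        Or.inr rfl⟩, rfl⟩

theorem mul_ite_min_max_eq_min (x : Fin n → ℝ) (z : ℝ) (i : Fin n) :
    w i * (if 0 ≤ w i then min (z * U i) (x i - (1 - z) * L i)
        else max (z * L i) (x i - (1 - z) * U i))
      = min (w i * (x i - breveL w L U i * (1 - z))) (z * (w i * breveU w L U i)) := by
  unfold breveL breveU
  split_ifs with h
  · rw [mul_min_of_nonneg _ _ h, min_comm]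
    congr 1 <;> ring
  · rcases le_total (z * L i) (x i - (1 - z) * U i) with h' | h'
    · rw [max_eq_right h', min_eq_left (by nlinarith)]
      ring
    · rw [max_eq_left h', min_eq_right (by nlinarith)]
      ring

theorem exists_split_of_mem_reluFormulation {x : Fin n → ℝ} {y z : ℝ}
    (hp : (x, y, z) ∈ reluFormulation w b L U) :
    ∃ u : Fin n → ℝ, (∀ i, z * L i ≤ u i ∧ u i ≤ z * U i
        ∧ (1 - z) * L i ≤ x i - u i ∧ x i - u i ≤ (1 - z) * U i) ∧ dotp w u + z * b = y := by
  obtain ⟨hx, hy, hz0, hz1, hfy, hI⟩ := hp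
  set lo : Fin n → ℝ := fun i => max (z * L i) (x i - (1 - z) * U i)
  set hi : Fin n → ℝ := fun i => min (z * U i) (x i - (1 - z) * L i)
  have mem_box : ∀ u, u ∈ Set.Icc lo hi ↔ ∀ i, z * L i ≤ u i ∧ u i ≤ z * U i
      ∧ (1 - z) * L i ≤ x i - u i ∧ x i - u i ≤ (1 - z) * U i := by
    intro u
    simp only [Set.mem_Icc, Pi.le_def, lo, hi, max_le_iff, le_min_iff, ← forall_and,
      sub_le_comm (a := x _), le_sub_comm (b := x _)]
    exact forall_congr' fun i => by tauto
  have hzx : z • x ∈ Set.Icc lo hi := by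
    refine (mem_box _).2 fun i => ?_
    simp only [Pi.smul_apply, smul_eq_mul]
    have := hx i
    refine ⟨?_, ?_, ?_, ?_⟩ <;> nlinarith
  -- the vertex of the box maximising `u ↦ w ⬝ᵥ u`
  set corner : Fin n → ℝ := fun i => if 0 ≤ w i then hi i else lo i
  have hcorner : corner ∈ Set.Icc lo hi := by
    have hle : lo ≤ hi := hzx.1.trans hzx.2
    refine ⟨fun i => ?_, fun i => ?_⟩ <;> simp only [corner] <;> split_ifs
    exacts [hle i, le_rfl, le_rfl, hle i]
  have hlow : dotp w (z • x) + z * b ≤ y := by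
    rw [dotp_eq_dotProduct, dotProduct_smul, smul_eq_mul, ← mul_add, ← dotp_eq_dotProduct]
    rcases le_total 0 (dotp w x + b) with hf | hf <;> nlinarith
  have hhigh : y ≤ dotp w corner + z * b := by
    obtain ⟨I, hIeq⟩ := exists_sum_add_sum_compl_eq_sum_min
      (fun i => w i * (x i - breveL w L U i * (1 - z))) (fun i => z * (w i * breveU w L U i))
    calc y ≤ _ := hI I
      _ = ∑ i ∈ I, w i * (x i - breveL w L U i * (1 - z))
            + ∑ i ∈ Iᶜ, z * (w i * breveU w L U i) + z * b := by
        rw [add_mul, sum_mul]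
        simp only [mul_comm z]
        ring
      _ = dotp w corner + z * b := by
        simp only [hIeq, dotp, corner, lo, hi, mul_ite_min_max_eq_min]
  have hcont : Continuous fun u : Fin n → ℝ => dotp w u + z * b := by
    unfold dotp
    fun_prop
  obtain ⟨u, hu, hu_eq⟩ := (convex_Icc lo hi).isPreconnected.intermediate_value hzx hcorner
    hcont.continuousOn ⟨hlow, hhigh⟩
  exact ⟨u, (mem_box u).1 hu, hu_eq⟩

theorem mem_openSegment_of_mem_reluFormulation {x : Fin n → ℝ} {y z : ℝ}
    (hp : (x, y, z) ∈ reluFormulation w b L U) (hz0 : 0 < z) (hz1 : z < 1) :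
    ∃ x₀ x₁ : Fin n → ℝ, (x₀, 0, 0) ∈ reluFormulation w b L U
      ∧ (x₁, y / z, 1) ∈ reluFormulation w b L U
      ∧ (x, y, z) ∈ openSegment ℝ (x₀, 0, 0) (x₁, y / z, 1) := by
  obtain ⟨u, hu, hwu⟩ := exists_split_of_mem_reluFormulation hp
  have hz1' : 0 < 1 - z := sub_pos.2 hz1
  refine ⟨(1 - z)⁻¹ • (x - u), z⁻¹ • u, ?_, ?_, 1 - z, z, hz1', hz0, by ring, ?_⟩
  · refine mk_zero_mem_reluFormulation_iff.2 ⟨fun i => ?_, ?_, rfl⟩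
    · simp only [Pi.smul_apply, Pi.sub_apply, smul_eq_mul, le_inv_mul_iff₀ hz1',
        inv_mul_le_iff₀ hz1']
      exact ⟨(hu i).2.2.1, (hu i).2.2.2⟩
    · have hfy : dotp w x + b ≤ y := hp.2.2.2.2.1
      have hval : dotp w ((1 - z)⁻¹ • (x - u)) + b = (1 - z)⁻¹ * (dotp w x + b - y) := by
        simp only [dotp_eq_dotProduct, dotProduct_smul, dotProduct_sub, smul_eq_mul] at hwu ⊢
        field_simp
        linarith
      rw [hval]
      exact mul_nonpos_of_nonneg_of_nonpos (inv_nonneg.2 hz1'.le) (by linarith)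
  · have hval : y / z = dotp w (z⁻¹ • u) + b := by
      simp only [dotp_eq_dotProduct, dotProduct_smul, smul_eq_mul] at hwu ⊢
      field_simp
      linarith
    refine mk_one_mem_reluFormulation_iff.2 ⟨fun i => ?_, ?_, hval⟩
    · simp only [Pi.smul_apply, smul_eq_mul, le_inv_mul_iff₀ hz0, inv_mul_le_iff₀ hz0]
      exact ⟨(hu i).1, (hu i).2.1⟩
    · exact hval ▸ div_nonneg hp.2.1 hz0.le
  · refine Prod.ext ?_ (Prod.ext ?_ ?_)
    · simp [smul_smul, hz0.ne', hz1'.ne']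
    · simp [mul_div_cancel₀ y hz0.ne']
    · simp

theorem binary_of_mem_extremePoints_reluFormulation {p : (Fin n → ℝ) × ℝ × ℝ}
    (hp : p ∈ (reluFormulation w b L U).extremePoints ℝ) : p.2.2 = 0 ∨ p.2.2 = 1 := by
  obtain ⟨x, y, z⟩ := p
  obtain ⟨hpQ, hext⟩ := hp
  by_contra! hz
  have hz0 : 0 < z := lt_of_le_of_ne hpQ.2.2.1 (Ne.symm hz.1)
  have hz1 : z < 1 := lt_of_le_of_ne hpQ.2.2.2.1 hz.2
  obtain ⟨x₀, x₁, h₀, h₁, hseg⟩ := mem_openSegment_of_mem_reluFormulation hpQ hz0 hz1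
  exact hz.1 (congrArg (·.2.2) (hext h₀ h₁ hseg)).symm

end ReluFormulation

theorem stmt15_general {η : ℕ}
    (w : Fin η → ℝ) (b : ℝ)
    (L U : Fin η → ℝ)
    (Q : Set ((Fin η → ℝ) × ℝ × ℝ))
    (hQ : Q = {p | (∀ i, L i ≤ p.1 i ∧ p.1 i ≤ U i) ∧ 0 ≤ p.2.1
      ∧ 0 ≤ p.2.2 ∧ p.2.2 ≤ 1
      ∧ dotp w p.1 + b ≤ p.2.1
      ∧ ∀ I : Finset (Fin η),
          p.2.1 ≤ ∑ i ∈ I, w i * (p.1 i - breveL w L U i * (1 - p.2.2))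
            + (b + ∑ i ∈ Iᶜ, w i * breveU w L U i) * p.2.2}) :
    -- (i) validity
    ((fun p : (Fin η → ℝ) × ℝ × ℝ => (p.1, p.2.1)) ''
        {p ∈ Q | p.2.2 = 0 ∨ p.2.2 = 1}
      = {q : (Fin η → ℝ) × ℝ | (∀ i, L i ≤ q.1 i ∧ q.1 i ≤ U i)
          ∧ q.2 = max 0 (dotp w q.1 + b)})
    -- (ii) every extreme point of Q has binary z
    ∧ (∀ p ∈ Set.extremePoints ℝ Q, p.2.2 = 0 ∨ p.2.2 = 1) := by
  subst hQ
  exact ⟨image_reluFormulation_binary, fun _ => binary_of_mem_extremePoints_reluFormulation⟩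

theorem stmt15 {η : ℕ} (hη : 1 ≤ η)
    (w : Fin η → ℝ) (b : ℝ)
    (L U : Fin η → ℝ) (hLU : ∀ i, L i ≤ U i)
    (hirrpos : ∃ x : Fin η → ℝ, (∀ i, L i ≤ x i ∧ x i ≤ U i) ∧ 0 < dotp w x + b)
    (hirrneg : ∃ x : Fin η → ℝ, (∀ i, L i ≤ x i ∧ x i ≤ U i) ∧ dotp w x + b < 0)
    (Q : Set ((Fin η → ℝ) × ℝ × ℝ))
    (hQ : Q = {p | (∀ i, L i ≤ p.1 i ∧ p.1 i ≤ U i) ∧ 0 ≤ p.2.1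
      ∧ 0 ≤ p.2.2 ∧ p.2.2 ≤ 1
      ∧ dotp w p.1 + b ≤ p.2.1
      ∧ ∀ I : Finset (Fin η),
          p.2.1 ≤ ∑ i ∈ I, w i * (p.1 i - breveL w L U i * (1 - p.2.2))
            + (b + ∑ i ∈ Iᶜ, w i * breveU w L U i) * p.2.2}) :
    -- (i) validity
    ((fun p : (Fin η → ℝ) × ℝ × ℝ => (p.1, p.2.1)) ''
        {p ∈ Q | p.2.2 = 0 ∨ p.2.2 = 1}
      = {q : (Fin η → ℝ) × ℝ | (∀ i, L i ≤ q.1 i ∧ q.1 i ≤ U i)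
          ∧ q.2 = max 0 (dotp w q.1 + b)})
    -- (ii) every extreme point of Q has binary z
    ∧ (∀ p ∈ Set.extremePoints ℝ Q, p.2.2 = 0 ∨ p.2.2 = 1) :=
  stmt15_general w b L U Q hQ
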